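/- Let φ be a continuous flow on M and A ⊆ M forward invariant with the property that every point of the topological boundary ∂A enters the interior of A immediately: for every p ∈ ∂A and every δ > 0 there exists 0 < s < δ with φ(s,p) ∈ int A. Then the entrance time function 𝒯_A is upper semicontinuous on its domain. -/

import Mathlib

/-!
If `𝒯_A(p) < a`, pick a time `s` with `φ(s,p) ∈ A` and `s < a`. Should `φ(s,p)` lie on the
boundary of `A`, the entry condition moves it into `int A` a moment later, still before `a`.
Once `φ(t,p) ∈ int A`, continuity of `φ(t,·)` keeps `φ(t,q)` in `int A` for all `q` near `p`,
so `𝒯_A(q) ≤ t < a` there.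
-/

open Set Topology ENNReal

/-- The entrance time of the point `p` into the set `A` under the flow `φ`, valued in
`[0, ∞]`: points that never enter `A` are assigned the value `+∞`. -/
noncomputable def entranceTime {M : Type*} (φ : ℝ → M → M) (A : Set M) (p : M) : ℝ≥0∞ :=
  sInf ((fun s : ℝ => ENNReal.ofReal s) '' {s : ℝ | 0 ≤ s ∧ φ s p ∈ A})

section EntranceTime

variable {M : Type*} {φ : ℝ → M → M} {A : Set M}

theorem entranceTime_le_ofReal {p : M} {t : ℝ} (ht : 0 ≤ t) (htA : φ t p ∈ A) :
    entranceTime φ A p ≤ ENNReal.ofReal t :=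
  sInf_le ⟨t, ⟨ht, htA⟩, rfl⟩

theorem exists_mem_of_entranceTime_lt {p : M} {a : ℝ≥0∞} (ha : entranceTime φ A p < a) :
    ∃ s, 0 ≤ s ∧ ENNReal.ofReal s < a ∧ φ s p ∈ A := by
  obtain ⟨_, ⟨s, ⟨hs0, hsA⟩, rfl⟩, hsa⟩ := sInf_lt_iff.mp ha
  exact ⟨s, hs0, hsa, hsA⟩

section Topology

variable [TopologicalSpace M]

theorem exists_flow_mem_interior_of_mem (hA : IsClosed A)
    (hφadd : ∀ s t p, φ (s + t) p = φ s (φ t p))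
    (hentry : ∀ p ∈ frontier A, ∀ δ > (0 : ℝ), ∃ s, 0 < s ∧ s < δ ∧ φ s p ∈ interior A)
    {p : M} {s δ : ℝ} (hsA : φ s p ∈ A) (hδ : 0 < δ) :
    ∃ t, s ≤ t ∧ t < s + δ ∧ φ t p ∈ interior A := by
  by_cases hint : φ s p ∈ interior A
  · exact ⟨s, le_rfl, by linarith, hint⟩
  · have hfr : φ s p ∈ frontier A := hA.frontier_eq ▸ ⟨hsA, hint⟩
    obtain ⟨r, hr0, hrδ, hrA⟩ := hentry _ hfr δ hδ
    exact ⟨r + s, by linarith, by linarith, by rwa [hφadd]⟩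

theorem eventually_entranceTime_le (hcont : Continuous fun q : ℝ × M => φ q.1 q.2)
    {p : M} {t : ℝ} (ht : 0 ≤ t) (htA : φ t p ∈ interior A) :
    ∀ᶠ q in 𝓝 p, entranceTime φ A q ≤ ENNReal.ofReal t := by
  have hφt : Continuous (φ t) := hcont.comp (continuous_const.prodMk continuous_id)
  filter_upwards [hφt.continuousAt.preimage_mem_nhds (isOpen_interior.mem_nhds htA)] with q hq
  exact entranceTime_le_ofReal ht (interior_subset hq)

theorem upperSemicontinuous_entranceTime (hcont : Continuous fun q : ℝ × M => φ q.1 q.2)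
    (hφadd : ∀ s t p, φ (s + t) p = φ s (φ t p)) (hA : IsClosed A)
    (hentry : ∀ p ∈ frontier A, ∀ δ > (0 : ℝ), ∃ s, 0 < s ∧ s < δ ∧ φ s p ∈ interior A) :
    UpperSemicontinuous (entranceTime φ A) := by
  intro p a ha
  obtain ⟨s, hs0, hsa, hsA⟩ := exists_mem_of_entranceTime_lt ha
  obtain ⟨r, -, hsr, hra⟩ := ENNReal.lt_iff_exists_real_btwn.mp hsa
  have hsr' : s < r := (ENNReal.ofReal_lt_ofReal_iff'.mp hsr).1
  obtain ⟨t, hst, htr, htA⟩ :=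
    exists_flow_mem_interior_of_mem hA hφadd hentry hsA (sub_pos.mpr hsr')
  filter_upwards [eventually_entranceTime_le hcont (hs0.trans hst) htA] with q hq
  calc entranceTime φ A q ≤ ENNReal.ofReal t := hq
    _ ≤ ENNReal.ofReal r := ENNReal.ofReal_le_ofReal (by linarith)
    _ < a := hra

end Topology

end EntranceTime

theorem stmt16_general {M : Type*} [TopologicalSpace M] (φ : ℝ → M → M)
    (hcont : Continuous fun q : ℝ × M => φ q.1 q.2)
    (hφadd : ∀ s t p, φ (s + t) p = φ s (φ t p))
    (A : Set M) (hA : IsClosed A)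
    (hentry : ∀ p ∈ frontier A, ∀ δ > (0 : ℝ), ∃ s, 0 < s ∧ s < δ ∧ φ s p ∈ interior A)
    (p : M)
    (a : ℝ≥0∞) (ha : entranceTime φ A p < a) :
    ∃ U ∈ 𝓝 p, ∀ q ∈ U, entranceTime φ A q < a :=
  (upperSemicontinuous_entranceTime hcont hφadd hA hentry p a ha).exists_mem

/-- Let `φ` be a continuous flow on `M` and `A ⊆ M` closed and forward
invariant such that every point of the topological boundary `∂A` enters the interior of `A`
immediately: for every `p ∈ ∂A` and `δ > 0` there is `0 < s < δ` with `φ(s,p) ∈ int A`.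
Then the entrance time function `𝒯_A` is upper semicontinuous on its domain
`{𝒯_A < ∞}`: whenever `𝒯_A(p) < a` there is a neighborhood `U` of `p` on which `𝒯_A < a`. -/
theorem stmt16 {M : Type*} [TopologicalSpace M] (φ : ℝ → M → M)
    (hcont : Continuous fun q : ℝ × M => φ q.1 q.2)
    (hφ0 : ∀ p, φ 0 p = p)
    (hφadd : ∀ s t p, φ (s + t) p = φ s (φ t p))
    (A : Set M) (hA : IsClosed A)
    (hinv : ∀ s ≥ (0 : ℝ), ∀ p ∈ A, φ s p ∈ A)
    (hentry : ∀ p ∈ frontier A, ∀ δ > (0 : ℝ), ∃ s, 0 < s ∧ s < δ ∧ φ s p ∈ interior A)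
    (p : M) (hdom : entranceTime φ A p ≠ ⊤)
    (a : ℝ≥0∞) (ha : entranceTime φ A p < a) :
    ∃ U ∈ 𝓝 p, ∀ q ∈ U, entranceTime φ A q < a :=
  stmt16_general φ hcont hφadd A hA hentry p a ha
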